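/- Let T ≥ 1 and define B = diag(I, I − U·e^{−1/T}) as a 2×2 block matrix where U is any (3T·2^n)-dimensional unitary satisfying U^{3T} = I. Then B is invertible, ‖B‖ ≤ 1 + e^{−1/T} < 2, and ‖B^{−1}‖ ≤ 1/(1 − e^{−1/T}) ≤ 2T; consequently the condition number κ = ‖B‖·‖B^{−1}‖ ≤ 4T. -/

import Mathlib

open Matrix

/-- Operator norm (ℓ²→ℓ² norm) of a complex matrix. -/
noncomputable def opNorm {m n : Type*} [Fintype m] [Fintype n] [DecidableEq n]
    (A : Matrix m n ℂ) : ℝ :=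
  ‖LinearMap.toContinuousLinearMap (Matrix.toEuclideanLin A)‖

/-- The block matrix `B = diag(I, I − U·e^{−1/T})`. -/
noncomputable def Bmat {d : ℕ} (T : ℕ) (U : Matrix (Fin d) (Fin d) ℂ) :
    Matrix (Fin d ⊕ Fin d) (Fin d ⊕ Fin d) ℂ :=
  Matrix.fromBlocks 1 0 0 (1 - (Real.exp (-1 / (T : ℝ)) : ℂ) • U)

/-!
Writing `c = e^{-1/T} < 1`, the matrix `B` is `1 - t` with `t = c • diag(0, U)`, and `‖t‖ ≤ c`
because `diag(0, U)` is a partial isometry. The Neumann series then gives invertibility,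
`‖B‖ ≤ 1 + c` and `‖B⁻¹‖ ≤ 1/(1 - c)`, and `1 - e^{-w} ≥ w/2` on `(0, 1]` gives `1/(1 - c) ≤ 2T`.
-/

open Real

lemma half_le_one_sub_exp_neg {w : ℝ} (hw₀ : 0 ≤ w) (hw₁ : w ≤ 1) : w / 2 ≤ 1 - exp (-w) := by
  have h : (1 + w) * exp (-w) ≤ 1 :=
    calc (1 + w) * exp (-w) ≤ exp w * exp (-w) := by
          gcongr; linarith [add_one_le_exp w]
      _ = 1 := by rw [← exp_add, add_neg_cancel, exp_zero]
  nlinarith [exp_pos (-w)]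

lemma one_div_one_sub_exp_le_two_mul {T : ℝ} (hT : 1 ≤ T) : 1 / (1 - exp (-1 / T)) ≤ 2 * T := by
  have hT₀ : 0 < T := by linarith
  have h := half_le_one_sub_exp_neg (w := 1 / T) (by positivity) (by rwa [div_le_one hT₀])
  rw [neg_div, div_le_iff₀ (by linarith [show 0 < 1 / T / 2 by positivity])]
  calc 1 = 2 * T * (1 / T / 2) := by field_simp
    _ ≤ 2 * T * (1 - exp (-(1 / T))) := by gcongr

section NormedRing

variable {R : Type*} [NormedRing R] [HasSummableGeomSeries R] [NormOneClass R]

lemma norm_inverse_one_sub_le {t : R} (ht : ‖t‖ < 1) :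
    ‖Ring.inverse (1 - t)‖ ≤ (1 - ‖t‖)⁻¹ := by
  simpa [← geom_series_eq_inverse t ht] using tsum_geometric_le_of_norm_lt_one t ht

end NormedRing

lemma CStarRing.norm_le_one_of_isStarProjection_star_mul_self {E : Type*} [NonUnitalNormedRing E]
    [StarRing E] [CStarRing E] {x : E} (hx : IsStarProjection (star x * x)) : ‖x‖ ≤ 1 := by
  have h := hx.norm_le
  rw [CStarRing.norm_star_mul_self] at h
  nlinarith [norm_nonneg x]

namespace Matrix

open scoped Matrix.Norms.L2Operator

variable {m n : Type*} [Fintype m] [Fintype n] [DecidableEq m] [DecidableEq n]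

omit [DecidableEq m] in
lemma opNorm_eq_l2_opNorm (A : Matrix m n ℂ) : opNorm A = ‖A‖ := rfl

lemma isStarProjection_fromBlocks_zero_one :
    IsStarProjection (fromBlocks (0 : Matrix m m ℂ) 0 0 (1 : Matrix n n ℂ)) := by
  constructor
  · simp [IsIdempotentElem, fromBlocks_multiply]
  · simp [IsSelfAdjoint, star_eq_conjTranspose, fromBlocks_conjTranspose]

lemma l2_opNorm_fromBlocks_zero_unitary_le {U : Matrix n n ℂ} (hU : U ∈ unitaryGroup n ℂ) :
    ‖fromBlocks (0 : Matrix m m ℂ) 0 0 U‖ ≤ 1 := by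
  apply CStarRing.norm_le_one_of_isStarProjection_star_mul_self
  have hUU : Uᴴ * U = 1 := hU.1
  have h : star (fromBlocks (0 : Matrix m m ℂ) 0 0 U) * fromBlocks 0 0 0 U = fromBlocks 0 0 0 1 := by
    simp [star_eq_conjTranspose, fromBlocks_conjTranspose, fromBlocks_multiply, hUU]
  exact h ▸ isStarProjection_fromBlocks_zero_one

end Matrix

open scoped Matrix.Norms.L2Operator in
lemma exists_Bmat_eq_one_sub_of_norm_le {d : ℕ} (T : ℕ) {U : Matrix (Fin d) (Fin d) ℂ}
    (hU : U ∈ unitaryGroup (Fin d) ℂ) :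
    ∃ t, Bmat T U = 1 - t ∧ ‖t‖ ≤ exp (-1 / (T : ℝ)) := by
  refine ⟨(exp (-1 / (T : ℝ)) : ℂ) • fromBlocks 0 0 0 U, ?_, ?_⟩
  · rw [Bmat, fromBlocks_smul, ← fromBlocks_one]
    simp only [smul_zero, sub_eq_add_neg, fromBlocks_neg, fromBlocks_add, neg_zero, add_zero]
  · rw [norm_smul, Complex.norm_real, Real.norm_of_nonneg (exp_pos _).le]
    exact mul_le_of_le_one_right (exp_pos _).le (l2_opNorm_fromBlocks_zero_unitary_le hU)

open scoped Matrix.Norms.L2Operator in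
theorem stmt16 {n T : ℕ} (hT : 1 ≤ T)
    (U : Matrix (Fin (3 * T * 2 ^ n)) (Fin (3 * T * 2 ^ n)) ℂ)
    (hU : U ∈ Matrix.unitaryGroup (Fin (3 * T * 2 ^ n)) ℂ) :
    IsUnit (Bmat T U) ∧
    opNorm (Bmat T U) ≤ 1 + Real.exp (-1 / (T : ℝ)) ∧
    1 + Real.exp (-1 / (T : ℝ)) < 2 ∧
    opNorm ((Bmat T U)⁻¹) ≤ 1 / (1 - Real.exp (-1 / (T : ℝ))) ∧
    1 / (1 - Real.exp (-1 / (T : ℝ))) ≤ 2 * T ∧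
    opNorm (Bmat T U) * opNorm ((Bmat T U)⁻¹) ≤ 4 * T := by
  have : Nonempty (Fin (3 * T * 2 ^ n)) := ⟨⟨0, by positivity⟩⟩
  set c := exp (-1 / (T : ℝ))
  have hc₁ : c < 1 := exp_lt_one_iff.mpr (div_neg_of_neg_of_pos (by norm_num) (by positivity))
  have hcT : 1 / (1 - c) ≤ 2 * T := one_div_one_sub_exp_le_two_mul (by exact_mod_cast hT)
  obtain ⟨t, hB, ht⟩ := exists_Bmat_eq_one_sub_of_norm_le T hU
  have ht₁ : ‖t‖ < 1 := ht.trans_lt hc₁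
  have hB_le : opNorm (Bmat T U) ≤ 1 + c := by
    rw [opNorm_eq_l2_opNorm, hB]
    exact (norm_sub_le _ _).trans (by rw [norm_one]; linarith)
  have hB_inv_le : opNorm (Bmat T U)⁻¹ ≤ 1 / (1 - c) := by
    rw [opNorm_eq_l2_opNorm, hB, nonsing_inv_eq_ringInverse, one_div]
    exact (norm_inverse_one_sub_le ht₁).trans (by gcongr)
  refine ⟨hB ▸ isUnit_one_sub_of_norm_lt_one ht₁, hB_le, by linarith, hB_inv_le, hcT, ?_⟩
  calc opNorm (Bmat T U) * opNorm (Bmat T U)⁻¹ ≤ 2 * (2 * T) :=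
        mul_le_mul (by linarith) (hB_inv_le.trans hcT) (norm_nonneg _) zero_le_two
    _ = 4 * T := by ring
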